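/- arXiv:1206.5197 — 6 statements merged into one kernel-verified Lean document; each statement's English description precedes it below -/
import Mathlib

section
/- Let S ⊆ ℝ^n × ℝ^m be a Lebesgue-measurable set, let z₀ ∈ ℝ^m be a fixed point, and let ε > 0 and δ > 0. Then the set T of all points x ∈ ℝ^n such that λ_m({z ∈ ℝ^m : (x,z) ∈ S and |z − z₀| ≤ r}) ≤ ε r^m for all 0 < r < δ is Lebesgue measurable (λ_m denotes m-dimensional Lebesgue measure). -/
open MeasureTheory Filter Set
open scoped Topology

/-! For fixed `r` the slice measure is a measurable function of `x` (Tonelli). It is monotone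
in `r` while the bound `ε rᵐ` is continuous, so it suffices to impose the inequality for
rational `r`, and `T` is a countable intersection of measurable sets. -/

/-- `r` is a limit from the right of rationals `q ∈ U`, and `f r ≤ f q ≤ g q`. -/
theorem forall_le_iff_forall_rat_le {α : Type*} [LinearOrder α] [TopologicalSpace α]
    [OrderClosedTopology α] {f g : ℝ → α} (hf : Monotone f) (hg : Continuous g)
    {U : Set ℝ} (hU : IsOpen U) :
    (∀ r ∈ U, f r ≤ g r) ↔ ∀ q : ℚ, (q : ℝ) ∈ U → f q ≤ g q := by
  refine ⟨fun h q hq => h q hq, fun h r hr => ?_⟩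
  set V := U ∩ Ioi r
  have hr_closure : r ∈ closure V := by
    have hV : V ∈ 𝓝[>] r := inter_mem (mem_nhdsWithin_of_mem_nhds (hU.mem_nhds hr))
      self_mem_nhdsWithin
    exact mem_closure_iff_frequently.2 ((eventually_mem_set.2 hV).frequently.filter_mono
      nhdsWithin_le_nhds)
  have hrat : V ∩ range ((↑) : ℚ → ℝ) ⊆ {s | f r ≤ g s} := by
    rintro _ ⟨⟨hqU, hrq⟩, q, rfl⟩
    exact (hf (le_of_lt hrq)).trans (h q hqU)
  have hclosed : IsClosed {s | f r ≤ g s} := isClosed_le continuous_const hg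
  exact hclosed.closure_subset_iff.2 hrat
    (closure_minimal (Rat.denseRange_cast.open_subset_closure_inter (hU.inter isOpen_Ioi))
      isClosed_closure hr_closure)

theorem measurable_slice_smallness_set_general {n m : ℕ}
    (S : Set (EuclideanSpace ℝ (Fin n) × EuclideanSpace ℝ (Fin m)))
    (hS : MeasurableSet S) (z₀ : EuclideanSpace ℝ (Fin m))
    (ε δ : ℝ) :
    MeasurableSet {x : EuclideanSpace ℝ (Fin n) |
      ∀ r : ℝ, 0 < r → r < δ →
        volume {z : EuclideanSpace ℝ (Fin m) | (x, z) ∈ S ∧ dist z z₀ ≤ r}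
          ≤ ENNReal.ofReal (ε * r ^ m)} := by
  let slice := fun x r => volume {z : EuclideanSpace ℝ (Fin m) | (x, z) ∈ S ∧ dist z z₀ ≤ r}
  have hmono : ∀ x, Monotone (slice x) := fun x _ _ hrs =>
    measure_mono fun _ hz => ⟨hz.1, hz.2.trans hrs⟩
  have hmeas : ∀ r, Measurable fun x => slice x r := fun r =>
    measurable_measure_prodMk_left (hS.inter (measurable_snd measurableSet_closedBall))
  have hbound : Continuous fun r : ℝ => ENNReal.ofReal (ε * r ^ m) :=
    ENNReal.continuous_ofReal.comp (by fun_prop)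
  have hrat : {x | ∀ r : ℝ, 0 < r → r < δ → slice x r ≤ ENNReal.ofReal (ε * r ^ m)} =
      ⋂ (q : ℚ) (_ : (q : ℝ) ∈ Ioo 0 δ), {x | slice x q ≤ ENNReal.ofReal (ε * (q : ℝ) ^ m)} := by
    ext x
    simpa only [mem_ofPred_eq, mem_iInter, mem_Ioo, and_imp] using
      forall_le_iff_forall_rat_le (hmono x) hbound isOpen_Ioo
  rw [hrat]
  exact MeasurableSet.iInter fun q => MeasurableSet.iInter fun _ =>
    measurableSet_le (hmeas q) measurable_const

/-- Measurability of the set `T` of points `x` such that the slices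
`{z : (x,z) ∈ S, |z − z₀| ≤ r}` have measure at most `ε rᵐ` for all `0 < r < δ`. -/
theorem measurable_slice_smallness_set {n m : ℕ}
    (S : Set (EuclideanSpace ℝ (Fin n) × EuclideanSpace ℝ (Fin m)))
    (hS : MeasurableSet S) (z₀ : EuclideanSpace ℝ (Fin m))
    (ε δ : ℝ) (hε : 0 < ε) (hδ : 0 < δ) :
    MeasurableSet {x : EuclideanSpace ℝ (Fin n) |
      ∀ r : ℝ, 0 < r → r < δ →
        volume {z : EuclideanSpace ℝ (Fin m) | (x, z) ∈ S ∧ dist z z₀ ≤ r}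
          ≤ ENNReal.ofReal (ε * r ^ m)} :=
  measurable_slice_smallness_set_general S hS z₀ ε δ
end

section
/- Let σ : ℝ^n × ℝ^m → ℝ̄ (extended reals) be a Lebesgue-measurable function and let z₀ ∈ ℝ^m be a fixed point. Then the functions x ↦ ap limsup_{z→z₀} σ(x,z) and x ↦ ap liminf_{z→z₀} σ(x,z) are Lebesgue-measurable functions of x ∈ ℝ^n. -/
/-! The approximate upper limit only depends on countably many data: it is the infimum over
rational levels `q` for which `{z | q < h z}` has density `0`, and since the ratio
`r ↦ λ(Y ∩ B(z₀,r)) / λ(B(z₀,r))` is left-continuous, its limit as `r → 0⁺` is already determined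
by rational radii. For a section `Y = {z | q < σ (x, z)}` each such ratio is measurable in `x` by
Tonelli, so everything is a countable combination of measurable functions of `x`. The lower limit
follows by negating `σ`. -/

open MeasureTheory Metric Filter Set Function
open scoped Topology ENNReal NNReal

/-- `Y` has density `d` at the point `x` with respect to the measure `μ`. -/
def HasDensityAt {X : Type*} [PseudoMetricSpace X] [MeasurableSpace X]
    (μ : Measure X) (Y : Set X) (x : X) (d : ℝ≥0∞) : Prop :=
  Tendsto (fun r : ℝ => μ (Y ∩ ball x r) / μ (ball x r)) (𝓝[>] (0 : ℝ)) (𝓝 d)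

/-- The approximate upper limit of `h : ℝ^m → ℝ̄` at `z₀`: the greatest lower bound of
the set of all real numbers `s` for which `{z : h z > s}` has density `0` at `z₀`. -/
noncomputable def apLimsupAt {m : ℕ} (h : EuclideanSpace ℝ (Fin m) → EReal)
    (z₀ : EuclideanSpace ℝ (Fin m)) : EReal :=
  sInf {s : EReal | ∃ t : ℝ, (t : EReal) = s ∧
    HasDensityAt volume {z : EuclideanSpace ℝ (Fin m) | (t : EReal) < h z} z₀ 0}

/-- The approximate lower limit of `h` at `z₀`. -/
noncomputable def apLiminfAt {m : ℕ} (h : EuclideanSpace ℝ (Fin m) → EReal)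
    (z₀ : EuclideanSpace ℝ (Fin m)) : EReal :=
  - apLimsupAt (fun z => - h z) z₀

lemma tendsto_comap_ratCast_nhdsGT_iff {α : Type*} [TopologicalSpace α] [RegularSpace α]
    {f : ℝ → α} {a : ℝ} {b : α} (hf : ∀ r ∈ Ioi a, ContinuousWithinAt f (Iio r) r) :
    Tendsto (fun q : ℚ => f q) (comap (↑) (𝓝[>] a)) (𝓝 b) ↔ Tendsto f (𝓝[>] a) (𝓝 b) := by
  refine ⟨fun h => ?_, fun h => h.comp tendsto_comap⟩
  rw [(closed_nhds_basis b).tendsto_right_iff] at h ⊢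
  rintro V ⟨hV, hVc⟩
  obtain ⟨t, ht, htV⟩ := mem_comap.1 (h V ⟨hV, hVc⟩)
  obtain ⟨u, hau, hut⟩ := mem_nhdsGT_iff_exists_Ioo_subset.1 ht
  filter_upwards [Ioo_mem_nhdsGT hau] with r hr
  -- `f r` is a limit of values of `f` at rationals in `(a, r)`, all of which lie in the closed `V`.
  have hr_closure : r ∈ closure (Ioo a r ∩ range ((↑) : ℚ → ℝ)) := by
    refine closure_minimal (Rat.denseRange_cast.open_subset_closure_inter isOpen_Ioo)
      isClosed_closure ?_
    rw [closure_Ioo hr.1.ne]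
    exact ⟨hr.1.le, le_rfl⟩
  have := mem_closure_iff_nhdsWithin_neBot.1 hr_closure
  refine hVc.mem_of_tendsto ((hf r hr.1).mono (inter_subset_left.trans Ioo_subset_Iio_self :
    Ioo a r ∩ range ((↑) : ℚ → ℝ) ⊆ Iio r)) ?_
  filter_upwards [self_mem_nhdsWithin]
  rintro _ ⟨hs, q, rfl⟩
  exact htV (hut ⟨hs.1, hs.2.trans hr.2⟩)

section Density

variable {X : Type*} [PseudoMetricSpace X] [MeasurableSpace X]

lemma tendsto_measure_inter_ball_nhdsLT (μ : Measure X) (Y : Set X) (x : X) (r : ℝ) :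
    Tendsto (fun s => μ (Y ∩ ball x s)) (𝓝[<] r) (𝓝 (μ (Y ∩ ball x r))) := by
  have hsets : Monotone fun s => Y ∩ ball x s :=
    fun s t hst => inter_subset_inter_right _ (ball_subset_ball hst)
  have hmono : Monotone fun s => μ (Y ∩ ball x s) := fun s t hst => measure_mono (hsets hst)
  convert hmono.tendsto_nhdsLT r
  refine le_antisymm ?_ (sSup_le (forall_mem_image.2 fun s hs => hmono hs.le))
  have hunion : Y ∩ ball x r = ⋃ s : Iio r, Y ∩ ball x s := by
    rw [← biUnion_lt_ball, inter_iUnion₂, iUnion_subtype]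
    rfl
  rw [hunion, Monotone.measure_iUnion (s := fun s : Iio r => Y ∩ ball x s)
    (hsets.comp (Subtype.mono_coe _)), sSup_image']

lemma HasDensityAt.zero_of_subset {μ : Measure X} {Y Y' : Set X} {x : X}
    (hY : HasDensityAt μ Y x 0) (h : Y' ⊆ Y) : HasDensityAt μ Y' x 0 :=
  tendsto_of_tendsto_of_tendsto_of_le_of_le tendsto_const_nhds hY (fun _ => zero_le)
    (fun _ => ENNReal.div_le_div_right (measure_mono (inter_subset_inter_left _ h)) _)

variable [ProperSpace X] (μ : Measure X) [μ.IsOpenPosMeasure] [IsFiniteMeasureOnCompacts μ]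

lemma continuousWithinAt_measure_inter_ball_div_measure_ball (Y : Set X) (x : X) {r : ℝ}
    (hr : 0 < r) :
    ContinuousWithinAt (fun s => μ (Y ∩ ball x s) / μ (ball x s)) (Iio r) r := by
  have hball := tendsto_measure_inter_ball_nhdsLT μ univ x r
  simp only [univ_inter] at hball
  exact ENNReal.Tendsto.div (tendsto_measure_inter_ball_nhdsLT μ Y x r)
    (Or.inr (measure_ball_pos μ x hr).ne') hball (Or.inl measure_ball_lt_top.ne)

lemma measurableSet_setOf_hasDensityAt [OpensMeasurableSpace X] [SFinite μ]
    {α : Type*} [MeasurableSpace α] {E : Set (α × X)} (hE : MeasurableSet E) (z : X) (d : ℝ≥0∞) :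
    MeasurableSet {x | HasDensityAt μ (Prod.mk x ⁻¹' E) z d} := by
  simp_rw [HasDensityAt, ← tendsto_comap_ratCast_nhdsGT_iff
    fun r hr => continuousWithinAt_measure_inter_ball_div_measure_ball μ _ z hr]
  exact measurableSet_tendsto _ fun q => Measurable.div_const
    (measurable_measure_prodMk_left (hE.inter (measurable_snd measurableSet_ball))) _

end Density

open scoped Classical in
lemma apLimsupAt_eq_iInf_rat {m : ℕ} (h : EuclideanSpace ℝ (Fin m) → EReal)
    (z₀ : EuclideanSpace ℝ (Fin m)) :
    apLimsupAt h z₀ = ⨅ q : ℚ,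
      if HasDensityAt volume {z | ((q : ℝ) : EReal) < h z} z₀ 0 then ((q : ℝ) : EReal) else ⊤ := by
  refine le_antisymm (le_iInf fun q => ?_) (le_sInf ?_)
  · split_ifs with hq
    · exact sInf_le ⟨q, rfl, hq⟩
    · exact le_top
  · rintro _ ⟨t, rfl, ht⟩
    refine le_of_forall_gt_imp_ge_of_dense fun s hs => ?_
    obtain ⟨q, htq, hqs⟩ := EReal.exists_rat_btwn_of_lt hs
    have hq : HasDensityAt volume {z | ((q : ℝ) : EReal) < h z} z₀ 0 :=
      ht.zero_of_subset fun z hz => htq.trans hz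
    calc _ ≤ _ := iInf_le _ q
      _ = ((q : ℝ) : EReal) := if_pos hq
      _ ≤ s := hqs.le

lemma measurable_apLimsupAt {α : Type*} [MeasurableSpace α] {m : ℕ}
    {σ : α × EuclideanSpace ℝ (Fin m) → EReal} (hσ : Measurable σ)
    (z₀ : EuclideanSpace ℝ (Fin m)) :
    Measurable fun x => apLimsupAt (fun z => σ (x, z)) z₀ := by
  simp_rw [apLimsupAt_eq_iInf_rat]
  exact .iInf fun q => .ite (measurableSet_setOf_hasDensityAt volume
    (measurableSet_lt measurable_const hσ) z₀ 0) measurable_const measurable_const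

/-- If `σ : ℝ^n × ℝ^m → ℝ̄` is measurable then the approximate upper and lower limits
`x ↦ ap limsup_{z→z₀} σ(x,z)` and `x ↦ ap liminf_{z→z₀} σ(x,z)` are measurable in `x`. -/
theorem measurable_apLimsup_apLiminf {n m : ℕ}
    (σ : EuclideanSpace ℝ (Fin n) × EuclideanSpace ℝ (Fin m) → EReal)
    (hσ : Measurable σ) (z₀ : EuclideanSpace ℝ (Fin m)) :
    Measurable (fun x : EuclideanSpace ℝ (Fin n) => apLimsupAt (fun z => σ (x, z)) z₀) ∧
    Measurable (fun x : EuclideanSpace ℝ (Fin n) => apLiminfAt (fun z => σ (x, z)) z₀) :=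
  ⟨measurable_apLimsupAt hσ z₀, (measurable_apLimsupAt hσ.neg z₀).neg⟩
end

section
/- Let E ⊆ ℝ^n be a Lebesgue-measurable set, let (M, d) be a complete separable metric space, and let f : E → M be a measurable mapping such that ap limsup_{x→g} d(f(x), f(g))/|x − g| < ∞ for every point g ∈ E. Then there is a sequence of pairwise disjoint measurable sets E₀, E₁, E₂, … with E = E₀ ∪ ⋃_{i≥1} E_i, λ(E₀) = 0, and such that every restriction f|_{E_i}, i ≥ 1, is a Lipschitz mapping. -/
open MeasureTheory Metric Filter Set Function
open scoped Topology ENNReal NNReal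

/-! At every `g ∈ E` the difference quotient of `f` is bounded by some `L` off a set of density
zero, and `E` itself has density one at almost every point of `E`. Hence almost every `g ∈ E`
belongs, for some `L` and `δ`, to the set of points `g` such that on every ball `B(g, q)` with
`q < δ` all but an `ε`-fraction of the points `x` lie in `E` and satisfy
`dist (f x) (f g) ≤ L * dist x g`. If `g, g'` are two such points and `dist g g' < q < δ`, the
ball of radius `q / 2` around their midpoint lies in `B(g, q) ∩ B(g', q)` and has measure
`2⁻ⁿ μ B(g, q)`; for `ε < 2⁻ⁿ⁻¹` it contains a point `x` that is good for both, and the triangle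
inequality through `f x` gives `dist (f g) (f g') ≤ 4 L dist g g'` when `q < 2 dist g g'`.
Cutting these sets into pieces of diameter `< δ` gives countably many measurable sets covering
almost all of `E`, on each of which `f` is Lipschitz. -/

open Module

section Density

variable {X : Type*} [PseudoMetricSpace X] [MeasurableSpace X] {μ : Measure X} {Y Y' : Set X}
  {x : X}

theorem HasDensityAt.mono (h : HasDensityAt μ Y x 0) (hY : Y' ⊆ Y) : HasDensityAt μ Y' x 0 :=
  tendsto_of_tendsto_of_tendsto_of_le_of_le tendsto_const_nhds h (fun _ => zero_le) fun _ =>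
    ENNReal.div_le_div_right (measure_mono (inter_subset_inter_left _ hY)) _

theorem HasDensityAt.union (h : HasDensityAt μ Y x 0) (h' : HasDensityAt μ Y' x 0) :
    HasDensityAt μ (Y ∪ Y') x 0 := by
  have hsum := h.add h'
  rw [add_zero] at hsum
  refine tendsto_of_tendsto_of_tendsto_of_le_of_le tendsto_const_nhds hsum (fun _ => zero_le)
    fun r => ?_
  rw [← ENNReal.add_div, union_inter_distrib_right]
  exact ENNReal.div_le_div_right (measure_union_le _ _) _

theorem HasDensityAt.eventually_measure_inter_ball_le (h : HasDensityAt μ Y x 0) {ε : ℝ≥0∞}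
    (hε : 0 < ε) (hε' : ε ≠ ∞) : ∀ᶠ r in 𝓝[>] (0 : ℝ), μ (Y ∩ ball x r) ≤ ε * μ (ball x r) :=
  (h.eventually (ge_mem_nhds hε)).mono fun _ hr =>
    (ENNReal.div_le_iff_le_mul (Or.inr hε') (Or.inr hε.ne')).1 hr

end Density

section ApproxLipschitz

variable {X M : Type*} [MetricSpace X] [PseudoMetricSpace M] {E : Set X} {f : X → M} {L : ℝ≥0}

def lipschitzTowards (E : Set X) (f : X → M) (L : ℝ≥0) (g : X) : Set X :=
  {x | x ∈ E ∧ dist (f x) (f g) ≤ L * dist x g}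

theorem lipschitzTowards_compl_subset {s : ℝ} (hsL : s ≤ L) (g : X) :
    (lipschitzTowards E f L g)ᶜ ⊆ Eᶜ ∪ {x ∈ E | s < dist (f x) (f g) / dist x g} := by
  intro x hx
  by_cases hxE : x ∈ E
  · refine Or.inr ⟨hxE, lt_of_not_ge fun hle => hx ⟨hxE, ?_⟩⟩
    rcases (dist_nonneg : 0 ≤ dist x g).eq_or_lt with hxg | hxg
    · rw [← hxg, dist_eq_zero.1 hxg.symm, dist_self, mul_zero]
    · calc dist (f x) (f g) ≤ s * dist x g := (div_le_iff₀ hxg).1 hle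
        _ ≤ L * dist x g := by gcongr
  · exact Or.inl hxE

variable [MeasurableSpace X] {μ : Measure X} {ε : ℝ≥0∞} {δ : ℝ}

/-- Only rational radii are tested, which keeps this set measurable; in the Lipschitz estimate
any radius slightly above `dist g g'` will do. -/
def approxLipschitzSet (μ : Measure X) (E : Set X) (f : X → M) (L : ℝ≥0) (ε : ℝ≥0∞) (δ : ℝ) :
    Set X :=
  {g | g ∈ E ∧ ∀ q : ℚ, 0 < q → (q : ℝ) < δ →
    μ ((lipschitzTowards E f L g)ᶜ ∩ ball g q) ≤ ε * μ (ball g q)}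

theorem approxLipschitzSet_subset : approxLipschitzSet μ E f L ε δ ⊆ E := fun _ hg => hg.1

theorem approxLipschitzSet_congr {F : X → M} (h : EqOn F f E) :
    approxLipschitzSet μ E F L ε δ = approxLipschitzSet μ E f L ε δ := by
  have hlip : ∀ g ∈ E, lipschitzTowards E F L g = lipschitzTowards E f L g := fun g hg => by
    ext x
    simp only [lipschitzTowards, mem_ofPred_eq]
    exact and_congr_right fun hx => by rw [h hx, h hg]
  ext g
  simp only [approxLipschitzSet, mem_ofPred_eq]
  exact and_congr_right fun hg => by rw [hlip g hg]

theorem exists_nat_mem_approxLipschitzSet {g : X} (hg : g ∈ E) (hEc : HasDensityAt μ Eᶜ g 0)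
    {s : ℝ} (hs : HasDensityAt μ {x ∈ E | s < dist (f x) (f g) / dist x g} g 0) (hε : 0 < ε)
    (hε' : ε ≠ ∞) : ∃ L k : ℕ, g ∈ approxLipschitzSet μ E f L ε (1 / (k + 1)) := by
  have hbad : HasDensityAt μ (lipschitzTowards E f ⌈s⌉₊ g)ᶜ g 0 :=
    (hEc.union hs).mono (lipschitzTowards_compl_subset (by exact_mod_cast Nat.le_ceil s) g)
  obtain ⟨δ, (hδ : 0 < δ), hsmall⟩ :=
    mem_nhdsGT_iff_exists_Ioo_subset.1 (hbad.eventually_measure_inter_ball_le hε hε')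
  obtain ⟨k, hk⟩ := exists_nat_one_div_lt hδ
  exact ⟨⌈s⌉₊, k, hg, fun q hq hqk => hsmall ⟨by exact_mod_cast hq, hqk.trans hk⟩⟩

theorem measurableSet_approxLipschitzSet [SecondCountableTopology X] [OpensMeasurableSpace X]
    [SecondCountableTopology M] [MeasurableSpace M] [OpensMeasurableSpace M] [SFinite μ]
    (hE : MeasurableSet E) (hf : Measurable f) (L : ℝ≥0) (ε : ℝ≥0∞) (δ : ℝ) :
    MeasurableSet (approxLipschitzSet μ E f L ε δ) := by
  have hball (r : ℝ) : MeasurableSet {p : X × X | dist p.2 p.1 < r} :=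
    measurableSet_lt (measurable_snd.dist measurable_fst) measurable_const
  have hgood : MeasurableSet {p : X × X | p.2 ∈ lipschitzTowards E f L p.1} :=
    (hE.preimage measurable_snd).inter <| measurableSet_le
      ((hf.comp measurable_snd).dist (hf.comp measurable_fst))
      (measurable_const.mul (measurable_snd.dist measurable_fst))
  have hq (q : ℚ) : MeasurableSet
      {g | μ ((lipschitzTowards E f L g)ᶜ ∩ ball g q) ≤ ε * μ (ball g q)} :=
    measurableSet_le (measurable_measure_prodMk_left (hgood.compl.inter (hball q)))
      ((measurable_measure_prodMk_left (hball q)).const_mul ε)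
  simp only [approxLipschitzSet, ofPred_and, ofPred_forall]
  exact hE.inter (.iInter fun q => .iInter fun _ => .iInter fun _ => hq q)

end ApproxLipschitz

theorem ball_midpoint_subset_ball {X : Type*} [NormedAddCommGroup X] [NormedSpace ℝ X] {g g' : X}
    {r : ℝ} (h : dist g g' < r) :
    ball (midpoint ℝ g g') (r / 2) ⊆ ball g r := by
  intro x hx
  rw [mem_ball] at hx ⊢
  have hm : dist (midpoint ℝ g g') g = dist g g' / 2 := by
    rw [dist_midpoint_left, Real.norm_ofNat]; ring
  linarith [dist_triangle x (midpoint ℝ g g') g]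

section Haar

open Measure

variable {X M : Type*} [NormedAddCommGroup X] [NormedSpace ℝ X] [MeasurableSpace X]
  [BorelSpace X] [FiniteDimensional ℝ X] {μ : Measure X} [μ.IsAddHaarMeasure]
  [PseudoMetricSpace M] {E : Set X} {f : X → M} {L : ℝ≥0} {ε : ℝ≥0∞} {δ : ℝ}

theorem hasDensityAt_zero_of_tendsto_closedBall {Y : Set X} {x : X}
    (h : Tendsto (fun r => μ (Y ∩ closedBall x r) / μ (closedBall x r)) (𝓝[>] 0) (𝓝 0)) :
    HasDensityAt μ Y x 0 := by
  refine tendsto_of_tendsto_of_tendsto_of_le_of_le' tendsto_const_nhds h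
    (.of_forall fun _ => zero_le) ?_
  filter_upwards [self_mem_nhdsWithin] with r (hr : 0 < r)
  rw [addHaar_closedBall μ x hr.le, ← addHaar_ball_of_pos μ x hr]
  exact ENNReal.div_le_div_right
    (measure_mono (inter_subset_inter_right _ ball_subset_closedBall)) _

theorem ae_hasDensityAt_compl (hE : MeasurableSet E) :
    ∀ᵐ x ∂μ, x ∈ E → HasDensityAt μ Eᶜ x 0 := by
  filter_upwards [Besicovitch.ae_tendsto_measure_inter_div_of_measurableSet μ hE.compl]
    with x hx hxE
  rw [indicator_of_notMem (notMem_compl_iff.2 hxE)] at hx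
  exact hasDensityAt_zero_of_tendsto_closedBall hx

theorem addHaar_ball_div_two (x y : X) (r : ℝ) :
    μ (ball x (r / 2)) = ENNReal.ofReal (2⁻¹ ^ finrank ℝ X) * μ (ball y r) := by
  rw [div_eq_inv_mul, addHaar_ball_mul_of_pos μ x (by norm_num), addHaar_ball_center μ y]

theorem exists_mem_lipschitzTowards_inter {g g' : X}
    (hε : 2 * ε < ENNReal.ofReal (2⁻¹ ^ finrank ℝ X))
    (hg : g ∈ approxLipschitzSet μ E f L ε δ)
    (hg' : g' ∈ approxLipschitzSet μ E f L ε δ) {q : ℚ} (hgq : dist g g' < q) (hqδ : (q : ℝ) < δ) :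
    ∃ x ∈ lipschitzTowards E f L g ∩ lipschitzTowards E f L g', dist x g < q ∧ dist x g' < q := by
  have hq : (0 : ℝ) < q := dist_nonneg.trans_lt hgq
  set B := ball (midpoint ℝ g g') ((q : ℝ) / 2)
  have hBg : B ⊆ ball g q := ball_midpoint_subset_ball hgq
  have hBg' : B ⊆ ball g' q := by
    rw [← dist_comm] at hgq
    simpa only [B, midpoint_comm] using ball_midpoint_subset_ball hgq
  have hlt : μ ((lipschitzTowards E f L g)ᶜ ∩ ball g q ∪
      (lipschitzTowards E f L g')ᶜ ∩ ball g' q) < μ B := calc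
    _ ≤ ε * μ (ball g q) + ε * μ (ball g' q) := (measure_union_le _ _).trans <|
        add_le_add (hg.2 q (by exact_mod_cast hq) hqδ) (hg'.2 q (by exact_mod_cast hq) hqδ)
    _ = 2 * ε * μ (ball g q) := by
        rw [addHaar_ball_center μ g', addHaar_ball_center μ g]; ring
    _ < ENNReal.ofReal (2⁻¹ ^ finrank ℝ X) * μ (ball g q) :=
        ENNReal.mul_lt_mul_left (measure_ball_pos μ g hq).ne' measure_ball_lt_top.ne hε
    _ = μ B := (addHaar_ball_div_two _ _ _).symm
  obtain ⟨x, hxB, hx⟩ := not_subset.1 fun h => (measure_mono h).not_gt hlt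
  rw [mem_union, not_or] at hx
  exact ⟨x, ⟨not_not.1 fun h => hx.1 ⟨h, hBg hxB⟩, not_not.1 fun h => hx.2 ⟨h, hBg' hxB⟩⟩,
    hBg hxB, hBg' hxB⟩

theorem dist_le_of_mem_approxLipschitzSet {g g' : X}
    (hε : 2 * ε < ENNReal.ofReal (2⁻¹ ^ finrank ℝ X))
    (hg : g ∈ approxLipschitzSet μ E f L ε δ)
    (hg' : g' ∈ approxLipschitzSet μ E f L ε δ) (hδ : dist g g' < δ) :
    dist (f g) (f g') ≤ 4 * L * dist g g' := by
  rcases eq_or_ne g g' with rfl | hne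
  · simp
  have hr := dist_pos.2 hne
  obtain ⟨q, hrq, hq⟩ := exists_rat_btwn (lt_min hδ (by linarith : dist g g' < 2 * dist g g'))
  obtain ⟨x, ⟨⟨-, hxg⟩, ⟨-, hxg'⟩⟩, hdg, hdg'⟩ :=
    exists_mem_lipschitzTowards_inter hε hg hg' hrq (hq.trans_le (min_le_left _ _))
  have hq2 : (q : ℝ) < 2 * dist g g' := hq.trans_le (min_le_right _ _)
  calc dist (f g) (f g') ≤ dist (f x) (f g) + dist (f x) (f g') := dist_triangle_left _ _ _
    _ ≤ L * dist x g + L * dist x g' := add_le_add hxg hxg'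
    _ ≤ L * q + L * q := by gcongr
    _ ≤ 4 * L * dist g g' := by nlinarith [L.coe_nonneg]

theorem lipschitzOnWith_approxLipschitzSet_inter_ball
    (hε : 2 * ε < ENNReal.ofReal (2⁻¹ ^ finrank ℝ X)) (c : X) :
    LipschitzOnWith (4 * L) f (approxLipschitzSet μ E f L ε δ ∩ ball c (δ / 2)) :=
  LipschitzOnWith.of_dist_le_mul fun g hg g' hg' => by
    push_cast
    exact dist_le_of_mem_approxLipschitzSet hε hg.1 hg'.1 <| by
      linarith [dist_triangle_right g g' c, mem_ball.1 hg.2, mem_ball.1 hg'.2]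

theorem measurableSet_approxLipschitzSet_of_restrict [SecondCountableTopology M]
    [MeasurableSpace M] [BorelSpace M] (hE : MeasurableSet E) (hf : Measurable fun x : E => f x)
    (L : ℝ≥0) (ε : ℝ≥0∞) (δ : ℝ) : MeasurableSet (approxLipschitzSet μ E f L ε δ) := by
  classical
  have hF : Measurable (E.piecewise f fun _ => f 0) :=
    measurable_of_restrict_of_restrict_compl hE (by rwa [domRestrict_piecewise])
      (by rw [domRestrict_piecewise_compl]; exact measurable_const)
  rw [← approxLipschitzSet_congr (piecewise_eqOn E f _)]
  exact measurableSet_approxLipschitzSet hE hF L ε δ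

end Haar

theorem exists_disjoint_measurable_cover {α ι : Type*} [MeasurableSpace α] {μ : Measure α}
    [Countable ι] [Nonempty ι] {E : Set α} {S : ι → Set α} (hE : MeasurableSet E)
    (hS : ∀ i, MeasurableSet (S i)) (hSE : ∀ i, S i ⊆ E) (hcover : ∀ᵐ x ∂μ, x ∈ E → ∃ i, x ∈ S i) :
    ∃ A : ℕ → Set α, Pairwise (Disjoint on A) ∧ (∀ i, MeasurableSet (A i)) ∧
      E = ⋃ i, A i ∧ μ (A 0) = 0 ∧ ∀ i, ∃ j, A (i + 1) ⊆ S j := by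
  obtain ⟨e, he⟩ := exists_surjective_nat ι
  let B : ℕ → Set α := fun | 0 => E \ ⋃ j, S j | i + 1 => S (e i)
  have hB : ∀ i, MeasurableSet (B i) := by
    rintro (_ | i)
    exacts [hE.diff (.iUnion hS), hS _]
  refine ⟨disjointed B, disjoint_disjointed B, .disjointed hB, ?_, ?_,
    fun i => ⟨e i, disjointed_subset B (i + 1)⟩⟩
  · rw [iUnion_disjointed, ← union_iUnion_nat_succ]
    simp only [B, he.iUnion_comp S, sdiff_union_of_subset (iUnion_subset hSE)]
  · rw [disjointed_zero, measure_eq_zero_iff_ae_notMem]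
    filter_upwards [hcover] with x hx ⟨hxE, hxS⟩ using hxS (mem_iUnion.2 (hx hxE))

theorem exists_countable_lipschitz_decomposition_general {n : ℕ} {M : Type*}
    [MetricSpace M] [TopologicalSpace.SeparableSpace M]
    [MeasurableSpace M] [BorelSpace M]
    (E : Set (EuclideanSpace ℝ (Fin n))) (hE : MeasurableSet E)
    (f : EuclideanSpace ℝ (Fin n) → M) (hf : Measurable (fun x : E => f x))
    (hap : ∀ g ∈ E, ∃ s : ℝ,
      HasDensityAt volume {x ∈ E | s < dist (f x) (f g) / dist x g} g 0) :
    ∃ A : ℕ → Set (EuclideanSpace ℝ (Fin n)),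
      Pairwise (Disjoint on A) ∧ (∀ i, MeasurableSet (A i)) ∧
      E = ⋃ i, A i ∧ volume (A 0) = 0 ∧
      ∀ i : ℕ, 1 ≤ i → ∃ C : ℝ≥0, LipschitzOnWith C f (A i) := by
  set c : ℝ := 2⁻¹ ^ finrank ℝ (EuclideanSpace ℝ (Fin n))
  have hc0 : 0 < c := by positivity
  set ε := ENNReal.ofReal (c / 4)
  have hε : 2 * ε < ENNReal.ofReal c := by
    rw [← ENNReal.ofReal_ofNat 2, ← ENNReal.ofReal_mul zero_le_two,
      ENNReal.ofReal_lt_ofReal_iff hc0]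
    linarith
  let S : ℕ × ℕ × ℕ → Set (EuclideanSpace ℝ (Fin n)) := fun ⟨L, k, i⟩ =>
    approxLipschitzSet volume E f L ε (1 / (k + 1)) ∩
      ball (TopologicalSpace.denseSeq _ i) (1 / (k + 1) / 2)
  have hcover : ∀ᵐ g, g ∈ E → ∃ p, g ∈ S p := by
    filter_upwards [ae_hasDensityAt_compl hE] with g hEc hg
    obtain ⟨s, hs⟩ := hap g hg
    obtain ⟨L, k, hLk⟩ := exists_nat_mem_approxLipschitzSet hg (hEc hg) hs
      (ENNReal.ofReal_pos.2 (by positivity : 0 < c / 4)) ENNReal.ofReal_ne_top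
    obtain ⟨i, hi⟩ := (TopologicalSpace.denseRange_denseSeq _).exists_dist_lt g
      (by positivity : (0 : ℝ) < 1 / (k + 1) / 2)
    exact ⟨(L, k, i), hLk, mem_ball.2 hi⟩
  obtain ⟨A, hAd, hAm, hEA, hA0, hAS⟩ := exists_disjoint_measurable_cover hE
    (fun _ => (measurableSet_approxLipschitzSet_of_restrict hE hf _ _ _).inter measurableSet_ball)
    (fun _ => inter_subset_left.trans approxLipschitzSet_subset) hcover
  refine ⟨A, hAd, hAm, hEA, hA0, fun i hi => ?_⟩
  obtain ⟨j, rfl⟩ := Nat.exists_eq_add_of_le' hi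
  obtain ⟨⟨L, k, i⟩, hsub⟩ := hAS j
  exact ⟨4 * L, (lipschitzOnWith_approxLipschitzSet_inter_ball hε _).mono hsub⟩

/-- If `f : E → M` is measurable with finite approximate upper dilatation at every point
of `E`, then `E` decomposes into a null set `A 0` and countably many disjoint measurable
sets on each of which `f` is Lipschitz. -/
theorem exists_countable_lipschitz_decomposition {n : ℕ} {M : Type*}
    [MetricSpace M] [CompleteSpace M] [TopologicalSpace.SeparableSpace M]
    [MeasurableSpace M] [BorelSpace M]
    (E : Set (EuclideanSpace ℝ (Fin n))) (hE : MeasurableSet E)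
    (f : EuclideanSpace ℝ (Fin n) → M) (hf : Measurable (fun x : E => f x))
    (hap : ∀ g ∈ E, ∃ s : ℝ,
      HasDensityAt volume {x ∈ E | s < dist (f x) (f g) / dist x g} g 0) :
    ∃ A : ℕ → Set (EuclideanSpace ℝ (Fin n)),
      Pairwise (Disjoint on A) ∧ (∀ i, MeasurableSet (A i)) ∧
      E = ⋃ i, A i ∧ volume (A 0) = 0 ∧
      ∀ i : ℕ, 1 ≤ i → ∃ C : ℝ≥0, LipschitzOnWith C f (A i) :=
  exists_countable_lipschitz_decomposition_general E hE f hf hap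
end

section
/- Let E ⊆ ℝ^n be a Lebesgue-measurable set and f : E → ℝ^m a mapping. Suppose there is a sequence of pairwise disjoint measurable sets Q₁, Q₂, … with λ(E \ ⋃_{i≥1} Q_i) = 0 such that every restriction f|_{Q_i} is a Lipschitz mapping. Then for each j = 1, …, n, f has an approximate partial derivative along the coordinate direction e_j at almost every point of E. -/
open MeasureTheory Metric Filter Set Function
open scoped Topology ENNReal NNReal

/-- `v` is an approximate partial derivative of `f` (as a map defined on `E`) along the
coordinate direction `e j` at `x`. -/
def HasApproxPartialDerivAt {n m : ℕ} (E : Set (EuclideanSpace ℝ (Fin n)))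
    (f : EuclideanSpace ℝ (Fin n) → EuclideanSpace ℝ (Fin m)) (j : Fin n)
    (x : EuclideanSpace ℝ (Fin n)) (v : EuclideanSpace ℝ (Fin m)) : Prop :=
  ∀ ε : ℝ, 0 < ε →
    HasDensityAt (volume : Measure ℝ)
      {t : ℝ | x + t • EuclideanSpace.single j (1 : ℝ) ∈ E ∧
        ε * |t| < ‖f (x + t • EuclideanSpace.single j (1 : ℝ)) - f x - t • v‖} 0 0

/-!
On each piece `Q i`, Rademacher's theorem makes `f` differentiable within `Q i` at almost every
point. By Fubini along lines parallel to `e j` and the one-dimensional Lebesgue density theorem,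
almost every `x ∈ Q i` is also a point where the line `t ↦ x + t • e j` leaves `Q i` only in a set
of density `0` at `t = 0`. At such a point, the derivative within `Q i` controls
`f (x + t • e j) - f x` for all small `t` outside a set of density `0`, which is exactly an
approximate partial derivative.
-/

theorem HasDensityAt.mono_of_inter_ball_subset {X : Type*} [PseudoMetricSpace X]
    [MeasurableSpace X] {μ : Measure X} {S T : Set X} {x : X} (hT : HasDensityAt μ T x 0)
    {δ : ℝ} (hδ : 0 < δ) (hST : S ∩ ball x δ ⊆ T) : HasDensityAt μ S x 0 := by
  refine tendsto_of_tendsto_of_tendsto_of_le_of_le' tendsto_const_nhds hT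
    (.of_forall fun _ => bot_le) ?_
  filter_upwards [Ioo_mem_nhdsGT hδ] with r hr
  refine ENNReal.div_le_div_right (measure_mono fun y hy => ?_) _
  exact ⟨hST ⟨hy.1, ball_subset_ball hr.2.le hy.2⟩, hy.2⟩

theorem hasDensityAt_zero_of_tendsto_closedBall_pow {T : Set ℝ} {x : ℝ}
    (h : Tendsto (fun k : ℕ => volume (T ∩ closedBall x (2⁻¹ ^ k)) /
      volume (closedBall x (2⁻¹ ^ k))) atTop (𝓝 0)) :
    HasDensityAt volume T x 0 := by
  rw [ENNReal.tendsto_nhds_zero] at h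
  refine ENNReal.tendsto_nhds_zero.2 fun ε hε => ?_
  obtain ⟨N, hN⟩ := eventually_atTop.1 (h (ε / 2) (ENNReal.half_pos hε.ne'))
  filter_upwards [Ioo_mem_nhdsGT (pow_pos (by norm_num : (0 : ℝ) < 2⁻¹) N)] with r ⟨hr, hrN⟩
  obtain ⟨k, hkr, hrk⟩ := exists_nat_pow_near_of_lt_one hr
    (hrN.le.trans (pow_le_one₀ (by norm_num) (by norm_num))) (by norm_num : (0 : ℝ) < 2⁻¹)
    (by norm_num)
  have hNk : N ≤ k := by
    have := hkr.trans hrN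
    rw [pow_lt_pow_iff_right_of_lt_one₀ (by norm_num) (by norm_num)] at this
    omega
  set ρ : ℝ := 2⁻¹ ^ k
  have hρr : ρ ≤ 2 * r := by
    have : ρ = 2 * 2⁻¹ ^ (k + 1) := by simp only [ρ, pow_succ]; ring
    linarith
  calc volume (T ∩ ball x r) / volume (ball x r)
      ≤ volume (T ∩ closedBall x ρ) / ENNReal.ofReal ρ := by
        rw [Real.volume_ball]
        exact ENNReal.div_le_div (measure_mono (inter_subset_inter_right _
          (ball_subset_closedBall.trans (closedBall_subset_closedBall hrk))))
          (ENNReal.ofReal_le_ofReal hρr)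
    _ = 2 * (volume (T ∩ closedBall x ρ) / volume (closedBall x ρ)) := by
        rw [Real.volume_closedBall, ← mul_div_assoc, ENNReal.ofReal_mul zero_le_two,
          ENNReal.ofReal_ofNat, ENNReal.mul_div_mul_left _ _ two_ne_zero ENNReal.ofNat_ne_top]
    _ ≤ 2 * (ε / 2) := mul_le_mul_right (hN k hNk) 2
    _ = ε := ENNReal.mul_div_cancel' (by simp) (by simp)

section LineSlices

variable {E : Type*} [NormedAddCommGroup E] [NormedSpace ℝ E] [MeasurableSpace E] [BorelSpace E]

theorem measurable_volume_lineSlice_inter [SecondCountableTopology E] {A : Set E}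
    (hA : MeasurableSet A) (v : E) {B : Set ℝ} (hB : MeasurableSet B) :
    Measurable fun x : E => volume ({t : ℝ | x + t • v ∈ A} ∩ B) :=
  measurable_measure_prodMk_left (ν := volume) (s := {p : E × ℝ | p.1 + p.2 • v ∈ A ∧ p.2 ∈ B})
    ((hA.preimage (measurable_fst.add (measurable_snd.smul_const v))).inter
      (hB.preimage measurable_snd))

theorem ae_hasDensityAt_compl_lineSlice [FiniteDimensional ℝ E] (μ : Measure E)
    [μ.IsAddHaarMeasure] {A : Set E} (hA : MeasurableSet A) (v : E) :
    ∀ᵐ x ∂μ, x ∈ A → HasDensityAt volume {t : ℝ | x + t • v ∉ A} 0 0 := by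
  -- Dyadic radii suffice (see `hasDensityAt_zero_of_tendsto_closedBall_pow`) and make the set of
  -- good points measurable.
  set ratio : ℕ → E → ℝ≥0∞ := fun k x =>
    volume ({t : ℝ | x + t • v ∈ Aᶜ} ∩ closedBall 0 (2⁻¹ ^ k)) /
      volume (closedBall (0 : ℝ) (2⁻¹ ^ k))
  set G : Set E := {x | x ∈ A → Tendsto (fun k => ratio k x) atTop (𝓝 0)}
  have hG : MeasurableSet G := hA.imp (measurableSet_tendsto _ fun k =>
    (measurable_volume_lineSlice_inter hA.compl v measurableSet_closedBall).div_const _)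
  have hline : ∀ p : E, ∀ᵐ t : ℝ, p + t • v ∈ G := by
    intro p
    set S : Set ℝ := {t | p + t • v ∈ A}
    have hS : MeasurableSet S :=
      hA.preimage (measurable_const.add (measurable_id.smul_const v))
    filter_upwards [Besicovitch.ae_tendsto_measure_inter_div_of_measurableSet volume hS.compl]
      with t ht htS
    rw [indicator_of_notMem (not_not.2 htS)] at ht
    refine (ht.comp (tendsto_pow_atTop_nhdsWithin_zero_of_lt_one (by norm_num : (0 : ℝ) < 2⁻¹)
      (by norm_num))).congr fun k => ?_
    have hslice : {s : ℝ | p + t • v + s • v ∈ Aᶜ} ∩ closedBall 0 (2⁻¹ ^ k) =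
        (t + ·) ⁻¹' (Sᶜ ∩ closedBall t (2⁻¹ ^ k)) := by
      ext s
      simp [S, add_smul, add_assoc]
    simp only [comp_apply, ratio, hslice, measure_preimage_add, Real.volume_closedBall]
  filter_upwards [ae_mem_of_ae_add_linearMap_mem
      (ContinuousLinearMap.smulRight (1 : ℝ →L[ℝ] ℝ) v).toLinearMap volume μ hG
      (by simpa using hline)]
    with x hx hxA
  exact hasDensityAt_zero_of_tendsto_closedBall_pow (hx hxA)

end LineSlices

theorem hasApproxPartialDerivAt_of_hasFDerivWithinAt {n m : ℕ}
    {E Q : Set (EuclideanSpace ℝ (Fin n))}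
    {f : EuclideanSpace ℝ (Fin n) → EuclideanSpace ℝ (Fin m)}
    {f' : EuclideanSpace ℝ (Fin n) →L[ℝ] EuclideanSpace ℝ (Fin m)} {j : Fin n}
    {x : EuclideanSpace ℝ (Fin n)} (hf : HasFDerivWithinAt f f' Q x)
    (hQ : HasDensityAt volume {t : ℝ | x + t • EuclideanSpace.single j (1 : ℝ) ∉ Q} 0 0) :
    HasApproxPartialDerivAt E f j x (f' (EuclideanSpace.single j 1)) := by
  intro ε hε
  obtain ⟨δ, hδ, hclose⟩ := Metric.eventually_nhds_iff.1
    (eventually_nhdsWithin_iff.1 (hf.isLittleO.def hε))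
  refine hQ.mono_of_inter_ball_subset hδ fun t ⟨⟨_, hfar⟩, ht⟩ htQ => hfar.not_ge ?_
  have := hclose (by simpa [dist_eq_norm, norm_smul] using ht) htQ
  simpa [norm_smul] using this

theorem approx_partials_of_lipschitz_decomposition_general {n m : ℕ}
    (E : Set (EuclideanSpace ℝ (Fin n)))
    (f : EuclideanSpace ℝ (Fin n) → EuclideanSpace ℝ (Fin m))
    (Q : ℕ → Set (EuclideanSpace ℝ (Fin n)))
    (hQmeas : ∀ i, MeasurableSet (Q i))
    (hcover : volume (E \ ⋃ i, Q i) = 0)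
    (hlip : ∀ i : ℕ, ∃ C : ℝ≥0, LipschitzOnWith C f (Q i)) :
    ∀ j : Fin n, ∀ᵐ x ∂volume, x ∈ E →
      ∃ v : EuclideanSpace ℝ (Fin m), HasApproxPartialDerivAt E f j x v := by
  intro j
  choose C hC using hlip
  filter_upwards [ae_all_iff.2 fun i => (hC i).ae_differentiableWithinAt_of_mem (μ := volume),
    ae_all_iff.2 fun i => ae_hasDensityAt_compl_lineSlice volume (hQmeas i)
      (EuclideanSpace.single j 1),
    measure_eq_zero_iff_ae_notMem.1 hcover] with x hdiff hdens hcov hxE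
  obtain ⟨i, hxi⟩ := mem_iUnion.1 (not_not.1 fun hx => hcov ⟨hxE, hx⟩)
  exact ⟨_, hasApproxPartialDerivAt_of_hasFDerivWithinAt (hdiff i hxi).hasFDerivWithinAt
    (hdens i hxi)⟩

/-- If `E` decomposes, up to a null set, into countably many disjoint measurable sets on
each of which `f` is Lipschitz, then `f` has approximate partial derivatives along every
coordinate direction almost everywhere in `E`. -/
theorem approx_partials_of_lipschitz_decomposition {n m : ℕ}
    (E : Set (EuclideanSpace ℝ (Fin n))) (hE : MeasurableSet E)
    (f : EuclideanSpace ℝ (Fin n) → EuclideanSpace ℝ (Fin m))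
    (Q : ℕ → Set (EuclideanSpace ℝ (Fin n)))
    (hdisj : Pairwise (Disjoint on Q)) (hQmeas : ∀ i, MeasurableSet (Q i))
    (hcover : volume (E \ ⋃ i, Q i) = 0)
    (hlip : ∀ i : ℕ, ∃ C : ℝ≥0, LipschitzOnWith C f (Q i)) :
    ∀ j : Fin n, ∀ᵐ x ∂volume, x ∈ E →
      ∃ v : EuclideanSpace ℝ (Fin m), HasApproxPartialDerivAt E f j x v :=
  approx_partials_of_lipschitz_decomposition_general E f Q hQmeas hcover hlip
end

section
/- Let E ⊆ ℝ^n be a Lebesgue-measurable set, let g ∈ E be a density point of E, and let f : E → ℝ^m. Suppose there exist η > 0 and 0 < K < ∞ such that |f(u) − f(v)| ≤ K |u − v| for all u, v ∈ E ∩ B(g, η), and suppose L : ℝ^n → ℝ^m is a linear map with ap lim_{v→g} |f(v) − f(g) − L(v − g)|/|v − g| = 0. Then the genuine limit holds: |f(v) − f(g) − L(v − g)|/|v − g| → 0 as v → g with v ∈ E. -/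
/-!
Fix `ε > 0` and call a point `w ∈ E` good if its linearisation error at `g` is at most
`ε ‖w - g‖`. Since `E` has density `1` and the bad points have density `0` at `g`, for `v` close
to `g` the good points cannot miss the ball `B(v, κ ‖v - g‖)`, whose measure is a fixed fraction
of that of `B(g, 2 ‖v - g‖)`. Comparing `v` with a good point `w` of that ball, the Lipschitz
bound on `f` and the boundedness of `L` control the error at `v` by `((K + ‖L‖) κ + 2 ε) ‖v - g‖`.
-/

open MeasureTheory Metric Filter Set Function
open scoped Topology ENNReal NNReal

open Module

theorem nonempty_diff_inter_of_measure_lt {X : Type*} [MeasurableSpace X] {μ : Measure X}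
    {E A B B' : Set X} (h : μ (B \ B') + μ (A ∩ B) < μ (E ∩ B)) :
    ((E \ A) ∩ B').Nonempty := by
  by_contra hempty
  have hcover : E ∩ B ⊆ (B \ B') ∪ (A ∩ B) := by
    rintro x ⟨hxE, hxB⟩
    by_cases hxA : x ∈ A
    · exact Or.inr ⟨hxA, hxB⟩
    · exact Or.inl ⟨hxB, fun hxB' => hempty ⟨x, ⟨hxE, hxA⟩, hxB'⟩⟩
  exact ((measure_mono hcover).trans (measure_union_le _ _)).not_gt h

theorem HasDensityAt.eventually_measure_add_lt {X : Type*} [PseudoMetricSpace X]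
    [MeasurableSpace X] [ProperSpace X] {μ : Measure X} [IsFiniteMeasureOnCompacts μ]
    [μ.IsOpenPosMeasure] {E A : Set X} {g : X} (hE : HasDensityAt μ E g 1)
    (hA : HasDensityAt μ A g 0) {c : ℝ≥0∞} (hc : c ≠ 0) :
    ∀ᶠ r in 𝓝[>] (0 : ℝ), μ (A ∩ ball g r) + (1 - c) * μ (ball g r) < μ (E ∩ ball g r) := by
  have hratio : ∀ᶠ r in 𝓝[>] (0 : ℝ),
      μ (A ∩ ball g r) / μ (ball g r) + (1 - c) < μ (E ∩ ball g r) / μ (ball g r) :=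
    (hA.add_const (1 - c)).eventually_lt hE
      (by simpa using ENNReal.sub_lt_self ENNReal.one_ne_top one_ne_zero hc)
  filter_upwards [hratio, self_mem_nhdsWithin] with r hr (hr0 : 0 < r)
  have h0 : μ (ball g r) ≠ 0 := (measure_ball_pos μ g hr0).ne'
  have htop : μ (ball g r) ≠ ∞ := measure_ball_lt_top.ne
  simpa only [add_mul, ENNReal.div_mul_cancel h0 htop] using ENNReal.mul_lt_mul_left h0 htop hr

section Remainder

variable {V W : Type*} [NormedAddCommGroup V] [NormedSpace ℝ V] [NormedAddCommGroup W]
  [NormedSpace ℝ W]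

theorem norm_sub_sub_apply_sub_le (f : V → W) (L : V →L[ℝ] W) (g v w : V) :
    ‖f v - f g - L (v - g)‖ ≤ ‖f v - f w‖ + ‖f w - f g - L (w - g)‖ + ‖L‖ * ‖v - w‖ := by
  have hdecomp : f v - f g - L (v - g) = (f v - f w) + (f w - f g - L (w - g)) - L (v - w) := by
    simp only [map_sub]
    abel
  rw [hdecomp]
  exact (norm_sub_le _ _).trans (add_le_add (norm_add_le _ _) (L.le_opNorm _))

theorem norm_sub_sub_apply_sub_le_of_dist_lt {f : V → W} {s : Set V} {K : ℝ≥0}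
    (hf : LipschitzOnWith K f s) (L : V →L[ℝ] W) {g v w : V} (hv : v ∈ s) (hw : w ∈ s)
    {ε κ : ℝ} (hε : 0 ≤ ε) (hκ : κ ≤ 1) (hwv : dist w v < κ * dist v g)
    (hrem : ‖f w - f g - L (w - g)‖ ≤ ε * ‖w - g‖) :
    ‖f v - f g - L (v - g)‖ ≤ ((K + ‖L‖) * κ + 2 * ε) * ‖v - g‖ := by
  rw [dist_comm, dist_eq_norm, dist_eq_norm] at hwv
  have hwg : ‖w - g‖ ≤ 2 * ‖v - g‖ := by
    have := norm_sub_le_norm_sub_add_norm_sub w v g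
    rw [norm_sub_rev w v] at this
    nlinarith [norm_nonneg (v - g)]
  have hlip : ‖f v - f w‖ ≤ K * ‖v - w‖ := by
    simpa only [dist_eq_norm] using hf.dist_le_mul v hv w hw
  calc ‖f v - f g - L (v - g)‖
      ≤ ‖f v - f w‖ + ‖f w - f g - L (w - g)‖ + ‖L‖ * ‖v - w‖ :=
        norm_sub_sub_apply_sub_le f L g v w
    _ ≤ (K + ‖L‖) * ‖v - w‖ + ε * (2 * ‖v - g‖) := by
        nlinarith [mul_le_mul_of_nonneg_left hwg hε]
    _ ≤ ((K + ‖L‖) * κ + 2 * ε) * ‖v - g‖ := by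
        nlinarith [mul_le_mul_of_nonneg_left hwv.le (by positivity : (0 : ℝ) ≤ K + ‖L‖)]

end Remainder

section Haar

variable {V W : Type*} [NormedAddCommGroup V] [NormedSpace ℝ V] [FiniteDimensional ℝ V]
  [MeasurableSpace V] [BorelSpace V] {μ : Measure V} [μ.IsAddHaarMeasure]

/-- `B(v, κ ‖v - g‖) ⊆ B(g, 2 ‖v - g‖)` carries the fixed fraction `(κ / 2) ^ dim V` of the
measure of the larger ball, which `A` and the complement of `E` eventually cannot cover. -/
theorem HasDensityAt.eventually_exists_mem_diff_dist_lt {E A : Set V} {g : V}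
    (hE : HasDensityAt μ E g 1) (hA : HasDensityAt μ A g 0) {κ : ℝ} (hκ0 : 0 < κ)
    (hκ1 : κ ≤ 1) :
    ∀ᶠ v in 𝓝[≠] g, ∃ w ∈ E \ A, dist w v < κ * dist v g := by
  set c := ENNReal.ofReal ((κ / 2) ^ finrank ℝ V)
  have hc : c ≠ 0 := (ENNReal.ofReal_pos.2 (by positivity)).ne'
  have hrad : Tendsto (fun v => 2 * dist v g) (𝓝[≠] g) (𝓝[>] 0) := by
    refine tendsto_nhdsWithin_of_tendsto_nhds_of_eventually_within _ ?_ ?_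
    · have hcont : Tendsto (fun v => 2 * dist v g) (𝓝 g) (𝓝 (2 * dist g g)) :=
        (tendsto_id.dist tendsto_const_nhds).const_mul 2
      simpa using hcont.mono_left nhdsWithin_le_nhds
    · filter_upwards [self_mem_nhdsWithin] with v (hv : v ≠ g)
      exact mul_pos two_pos (dist_pos.2 hv)
  filter_upwards [hrad.eventually (hE.eventually_measure_add_lt hA hc), self_mem_nhdsWithin]
    with v hv (hvg : v ≠ g)
  set s := 2 * dist v g
  have hs : 0 < s := mul_pos two_pos (dist_pos.2 hvg)
  have hsub : ball v (κ / 2 * s) ⊆ ball g s := fun x hx => by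
    rw [mem_ball] at hx ⊢
    nlinarith [dist_triangle x v g, dist_nonneg (x := v) (y := g)]
  have hsmall : μ (ball v (κ / 2 * s)) = c * μ (ball g s) := by
    rw [Measure.addHaar_ball_mul_of_pos μ v (by positivity), Measure.addHaar_ball_center μ g]
  have hannulus : μ (ball g s \ ball v (κ / 2 * s)) = (1 - c) * μ (ball g s) := by
    rw [measure_sdiff hsub measurableSet_ball.nullMeasurableSet measure_ball_lt_top.ne, hsmall,
      ENNReal.sub_mul fun _ _ => measure_ball_lt_top.ne, one_mul]
  obtain ⟨w, hw, hwv⟩ := nonempty_diff_inter_of_measure_lt (μ := μ) (E := E)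
    (by rwa [hannulus, add_comm])
  refine ⟨w, hw, ?_⟩
  rw [mem_ball] at hwv
  linarith

variable [NormedAddCommGroup W] [NormedSpace ℝ W]

theorem tendsto_norm_sub_sub_apply_sub_div_of_hasDensityAt {E U : Set V} {g : V}
    (hE : HasDensityAt μ E g 1) (hU : U ∈ 𝓝 g) {f : V → W} {K : ℝ≥0}
    (hf : LipschitzOnWith K f (E ∩ U)) (L : V →L[ℝ] W)
    (hap : ∀ ε : ℝ, 0 < ε →
      HasDensityAt μ {v ∈ E | ε * ‖v - g‖ < ‖f v - f g - L (v - g)‖} g 0) :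
    Tendsto (fun v => ‖f v - f g - L (v - g)‖ / ‖v - g‖) (𝓝[E \ {g}] g) (𝓝 0) := by
  obtain ⟨ρ, hρ, hρU⟩ := Metric.mem_nhds_iff.1 hU
  rw [Metric.tendsto_nhds]
  intro δ hδ
  set κ := min 1 (δ / (2 * (K + ‖L‖ + 1)))
  have hκ0 : 0 < κ := lt_min one_pos (by positivity)
  have hκ1 : κ ≤ 1 := min_le_left _ _
  have hκδ : (K + ‖L‖) * κ ≤ δ / 2 := by
    have : κ * (2 * (K + ‖L‖ + 1)) ≤ δ := (le_div_iff₀ (by positivity)).1 (min_le_right _ _)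
    nlinarith
  have hnear : ∀ᶠ v in 𝓝[E \ {g}] g, v ∈ E \ {g} ∧ v ∈ ball g (ρ / 2) ∧
      ∃ w ∈ E \ {w ∈ E | δ / 8 * ‖w - g‖ < ‖f w - f g - L (w - g)‖},
        dist w v < κ * dist v g :=
    eventually_mem_nhdsWithin.and <|
      (eventually_nhdsWithin_of_eventually_nhds (ball_mem_nhds g (half_pos hρ))).and <|
        nhdsWithin_mono g (sdiff_subset_compl E {g})
          (hE.eventually_exists_mem_diff_dist_lt (hap _ (by positivity)) hκ0 hκ1)
  filter_upwards [hnear] with v ⟨⟨hvE, hvg⟩, hvρ, w, ⟨hwE, hw_good⟩, hwv⟩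
  have hvg' : 0 < ‖v - g‖ := norm_pos_iff.2 (sub_ne_zero.2 hvg)
  have hvU : v ∈ U := hρU (ball_subset_ball (half_le_self hρ.le) hvρ)
  have hwU : w ∈ U := hρU <| by
    rw [mem_ball] at hvρ ⊢
    nlinarith [dist_triangle w v g]
  have hbound := norm_sub_sub_apply_sub_le_of_dist_lt hf L ⟨hvE, hvU⟩ ⟨hwE, hwU⟩
    (by positivity) hκ1 hwv (not_lt.1 fun h => hw_good ⟨hwE, h⟩)
  rw [Real.dist_eq, sub_zero, abs_of_nonneg (by positivity), div_lt_iff₀ hvg']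
  nlinarith

end Haar

theorem differential_of_approx_differential_of_lipschitz_general {n m : ℕ}
    (E : Set (EuclideanSpace ℝ (Fin n)))
    (g : EuclideanSpace ℝ (Fin n))
    (hgd : HasDensityAt volume E g 1)
    (f : EuclideanSpace ℝ (Fin n) → EuclideanSpace ℝ (Fin m))
    (η K : ℝ) (hη : 0 < η)
    (hlip : ∀ u ∈ E ∩ ball g η, ∀ v ∈ E ∩ ball g η, ‖f u - f v‖ ≤ K * ‖u - v‖)
    (L : EuclideanSpace ℝ (Fin n) →ₗ[ℝ] EuclideanSpace ℝ (Fin m))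
    (hap : ∀ ε : ℝ, 0 < ε →
      HasDensityAt volume {v ∈ E | ε * ‖v - g‖ < ‖f v - f g - L (v - g)‖} g 0) :
    Tendsto (fun v => ‖f v - f g - L (v - g)‖ / ‖v - g‖) (𝓝[E \ {g}] g) (𝓝 0) := by
  have hf : LipschitzOnWith (Real.toNNReal K) f (E ∩ ball g η) :=
    LipschitzOnWith.of_dist_le' (by simpa only [dist_eq_norm] using hlip)
  simpa using tendsto_norm_sub_sub_apply_sub_div_of_hasDensityAt hgd (ball_mem_nhds g hη) hf
    (LinearMap.toContinuousLinearMap L) (by simpa using hap)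

/-- If `f` is Lipschitz on `E` near a density point `g` of `E` and `L` is an approximate
differential of `f` at `g`, then `L` is a genuine differential of `f|_E` at `g`. -/
theorem differential_of_approx_differential_of_lipschitz {n m : ℕ}
    (E : Set (EuclideanSpace ℝ (Fin n))) (hE : MeasurableSet E)
    (g : EuclideanSpace ℝ (Fin n)) (hgE : g ∈ E)
    (hgd : HasDensityAt volume E g 1)
    (f : EuclideanSpace ℝ (Fin n) → EuclideanSpace ℝ (Fin m))
    (η K : ℝ) (hη : 0 < η) (hK : 0 < K)
    (hlip : ∀ u ∈ E ∩ ball g η, ∀ v ∈ E ∩ ball g η, ‖f u - f v‖ ≤ K * ‖u - v‖)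
    (L : EuclideanSpace ℝ (Fin n) →ₗ[ℝ] EuclideanSpace ℝ (Fin m))
    (hap : ∀ ε : ℝ, 0 < ε →
      HasDensityAt volume {v ∈ E | ε * ‖v - g‖ < ‖f v - f g - L (v - g)‖} g 0) :
    Tendsto (fun v => ‖f v - f g - L (v - g)‖ / ‖v - g‖) (𝓝[E \ {g}] g) (𝓝 0) :=
  differential_of_approx_differential_of_lipschitz_general E g hgd f η K hη hlip L hap
end

section
/- Let U ⊆ ℝ^n be an open set, A ⊆ U a Lebesgue-measurable set, and f : U → ℝ^m a mapping satisfying limsup_{x→a} |f(x) − f(a)|/|x − a| < ∞ at every point a ∈ A. Then f is (Fréchet) differentiable at almost every point of A. -/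
open MeasureTheory Metric Filter Set Function Asymptotics
open scoped Topology ENNReal NNReal

set_option linter.unusedSectionVars false
set_option linter.unusedVariables false

section Aux
variable {E : Type*} [NormedAddCommGroup E] [NormedSpace ℝ E]

/-- The sup-convolution (Lipschitz envelope from above) is Lipschitz. -/
lemma lipschitz_supConv (g : E → ℝ) (B : Set E) (hB : B.Nonempty) (M : ℝ)
    (hM : ∀ y ∈ B, g y ≤ M) (K : ℝ≥0) :
    LipschitzWith K (fun x => sSup ((fun y => g y - K * dist x y) '' B)) := by
  have hbdd : ∀ x : E, BddAbove ((fun y => g y - (K : ℝ) * dist x y) '' B) := by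
    intro x
    refine ⟨M, ?_⟩
    rintro z ⟨y, hy, rfl⟩
    have h0 : (0:ℝ) ≤ (K:ℝ) * dist x y := mul_nonneg K.2 dist_nonneg
    show g y - (K:ℝ) * dist x y ≤ M
    linarith [hM y hy]
  have key : ∀ x x' : E,
      sSup ((fun y => g y - (K:ℝ) * dist x y) '' B)
        ≤ sSup ((fun y => g y - (K:ℝ) * dist x' y) '' B) + K * dist x x' := by
    intro x x'
    refine csSup_le (hB.image _) ?_
    rintro z ⟨y, hy, rfl⟩
    have h1 : g y - (K:ℝ) * dist x' y ≤ sSup ((fun y => g y - (K:ℝ) * dist x' y) '' B) :=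
      le_csSup (hbdd x') ⟨y, hy, rfl⟩
    have h2 : dist x' y ≤ dist x' x + dist x y := dist_triangle _ _ _
    have h3 : (K:ℝ) * dist x' y ≤ K * dist x' x + K * dist x y := by
      rw [← mul_add]; exact mul_le_mul_of_nonneg_left h2 K.2
    rw [dist_comm x x']
    show g y - (K:ℝ) * dist x y ≤ sSup ((fun y => g y - (K:ℝ) * dist x' y) '' B) + (K:ℝ) * dist x' x
    linarith
  refine LipschitzWith.of_dist_le_mul fun x x' => ?_
  rw [Real.dist_eq, abs_sub_le_iff]
  constructor <;> [skip; rw [dist_comm]] <;> linarith [key x x', key x' x]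


/-- The inf-convolution (Lipschitz envelope from below) is Lipschitz. -/
lemma lipschitz_infConv (g : E → ℝ) (B : Set E) (hB : B.Nonempty) (M : ℝ)
    (hM : ∀ y ∈ B, M ≤ g y) (K : ℝ≥0) :
    LipschitzWith K (fun x => sInf ((fun y => g y + K * dist x y) '' B)) := by
  have hbdd : ∀ x : E, BddBelow ((fun y => g y + (K : ℝ) * dist x y) '' B) := by
    intro x
    refine ⟨M, ?_⟩
    rintro z ⟨y, hy, rfl⟩
    have h0 : (0:ℝ) ≤ (K:ℝ) * dist x y := mul_nonneg K.2 dist_nonneg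
    show M ≤ g y + (K:ℝ) * dist x y
    linarith [hM y hy]
  have key : ∀ x x' : E,
      sInf ((fun y => g y + (K:ℝ) * dist x' y) '' B)
        ≤ sInf ((fun y => g y + (K:ℝ) * dist x y) '' B) + K * dist x x' := by
    intro x x'
    rw [← sub_le_iff_le_add]
    refine le_csInf (hB.image _) ?_
    rintro z ⟨y, hy, rfl⟩
    have h1 : sInf ((fun y => g y + (K:ℝ) * dist x' y) '' B) ≤ g y + (K:ℝ) * dist x' y :=
      csInf_le (hbdd x') ⟨y, hy, rfl⟩
    have h2 : dist x' y ≤ dist x' x + dist x y := dist_triangle _ _ _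
    have h3 : (K:ℝ) * dist x' y ≤ K * dist x' x + K * dist x y := by
      rw [← mul_add]; exact mul_le_mul_of_nonneg_left h2 K.2
    rw [dist_comm x x']
    show sInf ((fun y => g y + (K:ℝ) * dist x' y) '' B) - (K:ℝ) * dist x' x
        ≤ g y + (K:ℝ) * dist x y
    linarith
  refine LipschitzWith.of_dist_le_mul fun x x' => ?_
  rw [Real.dist_eq, abs_sub_le_iff]
  have hd : (K:ℝ) * dist x x' = (K:ℝ) * dist x' x := by rw [dist_comm]
  constructor <;> linarith [key x' x, key x x']

/-- Squeeze lemma: a function pinched between two functions differentiable at `a`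
with the same value at `a` is differentiable at `a`. -/
lemma squeeze_differentiableAt {v w g : E → ℝ} {a : E}
    (hvg : ∀ᶠ x in 𝓝 a, v x ≤ g x) (hgw : ∀ᶠ x in 𝓝 a, g x ≤ w x)
    (hva : v a = g a) (hwa : w a = g a)
    (hv : DifferentiableAt ℝ v a) (hw : DifferentiableAt ℝ w a) :
    DifferentiableAt ℝ g a := by
  have hga : g a ≤ w a := le_of_eq hwa.symm
  have hmin : IsLocalMin (fun x => w x - v x) a := by
    filter_upwards [hvg, hgw] with x h1 h2
    show w a - v a ≤ w x - v x
    rw [hva, hwa]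
    linarith
  have hdwv : DifferentiableAt ℝ (fun x => w x - v x) a := hw.sub hv
  have hder0 : fderiv ℝ (fun x => w x - v x) a = 0 := hmin.fderiv_eq_zero
  have hsub : fderiv ℝ (fun x => w x - v x) a = fderiv ℝ w a - fderiv ℝ v a :=
    fderiv_sub hw hv
  have heq : fderiv ℝ v a = fderiv ℝ w a := by
    have := hsub.symm.trans hder0
    rwa [sub_eq_zero, eq_comm] at this
  set L := fderiv ℝ w a with hL
  have hw' : (fun x => w x - w a - L (x - a)) =o[𝓝 a] fun x => x - a :=
    (hw.hasFDerivAt).isLittleO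
  have hv' : (fun x => v x - v a - L (x - a)) =o[𝓝 a] fun x => x - a := by
    rw [← heq]; exact (hv.hasFDerivAt).isLittleO
  have hbig : (fun x => g x - g a - L (x - a)) =O[𝓝 a]
      fun x => |w x - w a - L (x - a)| + |v x - v a - L (x - a)| := by
    rw [isBigO_iff]
    refine ⟨1, ?_⟩
    filter_upwards [hvg, hgw] with x h1 h2
    have hwx : g x - g a - L (x - a) ≤ w x - w a - L (x - a) := by
      rw [hwa]; linarith
    have hvx : v x - v a - L (x - a) ≤ g x - g a - L (x - a) := by
      rw [hva]; linarith
    rw [one_mul, Real.norm_eq_abs, Real.norm_eq_abs]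
    rw [abs_of_nonneg (by positivity : (0:ℝ) ≤ |w x - w a - L (x - a)| + |v x - v a - L (x - a)|), abs_le]
    have e1 := neg_abs_le (v x - v a - L (x - a))
    have e2 := le_abs_self (w x - w a - L (x - a))
    have e3 := abs_nonneg (v x - v a - L (x - a))
    have e4 := abs_nonneg (w x - w a - L (x - a))
    constructor <;> linarith
  have hsum : (fun x => |w x - w a - L (x - a)| + |v x - v a - L (x - a)|)
      =o[𝓝 a] fun x => x - a := by
    simpa using hw'.abs_left.add hv'.abs_left
  have hg' : (fun x => g x - g a - L (x - a)) =o[𝓝 a] fun x => x - a :=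
    hbig.trans_isLittleO hsum
  have : HasFDerivAt g L a := .of_isLittleO hg'
  exact this.differentiableAt

end Aux

lemma stepanov_real {n : ℕ} (A : Set (EuclideanSpace ℝ (Fin n)))
    (g : EuclideanSpace ℝ (Fin n) → ℝ)
    (hg : ∀ a ∈ A, ∃ K : ℕ, ∃ ρ > (0:ℝ), ∀ x ∈ ball a ρ, |g x - g a| ≤ K * ‖x - a‖) :
    ∀ᵐ a ∂volume, a ∈ A → DifferentiableAt ℝ g a := by
  classical
  obtain ⟨D, hDc, hDd⟩ := TopologicalSpace.exists_countable_dense (EuclideanSpace ℝ (Fin n))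
  set w : EuclideanSpace ℝ (Fin n) → ℝ → ℝ≥0 → EuclideanSpace ℝ (Fin n) → ℝ :=
    fun c r K x => sSup ((fun y => g y - K * dist x y) '' ball c r) with hw_def
  set v : EuclideanSpace ℝ (Fin n) → ℝ → ℝ≥0 → EuclideanSpace ℝ (Fin n) → ℝ :=
    fun c r K x => sInf ((fun y => g y + K * dist x y) '' ball c r) with hv_def
  set N : EuclideanSpace ℝ (Fin n) → ℝ → ℝ≥0 → Set (EuclideanSpace ℝ (Fin n)) :=
    fun c r K =>
      if ((ball c r).Nonempty ∧ ∃ M, ∀ y ∈ ball c r, |g y| ≤ M) then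
        {x | ¬ (DifferentiableAt ℝ (w c r K) x ∧ DifferentiableAt ℝ (v c r K) x)}
      else ∅ with hN_def
  have hN : ∀ c r K, volume (N c r K) = 0 := by
    intro c r K
    by_cases h : (ball c r).Nonempty ∧ ∃ M, ∀ y ∈ ball c r, |g y| ≤ M
    · obtain ⟨hne, M, hM⟩ := id h
      have hwL : LipschitzWith K (w c r K) :=
        lipschitz_supConv g (ball c r) hne M (fun y hy => (abs_le.1 (hM y hy)).2) K
      have hvL : LipschitzWith K (v c r K) :=
        lipschitz_infConv g (ball c r) hne (-M) (fun y hy => (abs_le.1 (hM y hy)).1) K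
      have hae : ∀ᵐ x ∂(volume : Measure (EuclideanSpace ℝ (Fin n))),
          DifferentiableAt ℝ (w c r K) x ∧ DifferentiableAt ℝ (v c r K) x :=
        (hwL.ae_differentiableAt).and (hvL.ae_differentiableAt)
      have h0 := ae_iff.1 hae
      show volume (if ((ball c r).Nonempty ∧ ∃ M, ∀ y ∈ ball c r, |g y| ≤ M) then
        {x | ¬ (DifferentiableAt ℝ (w c r K) x ∧ DifferentiableAt ℝ (v c r K) x)}
        else ∅) = 0
      rw [if_pos h]
      exact h0
    · show volume (if ((ball c r).Nonempty ∧ ∃ M, ∀ y ∈ ball c r, |g y| ≤ M) then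
        {x | ¬ (DifferentiableAt ℝ (w c r K) x ∧ DifferentiableAt ℝ (v c r K) x)}
        else ∅) = 0
      rw [if_neg h]
      simp
  set Bad : Set (EuclideanSpace ℝ (Fin n)) :=
    ⋃ c ∈ D, ⋃ r ∈ (Set.range ((↑) : ℚ → ℝ)), ⋃ K : ℕ, N c r K with hBad_def
  have hBad : volume Bad = 0 := by
    rw [hBad_def]
    refine (measure_biUnion_null_iff hDc).2 fun c _ => ?_
    refine (measure_biUnion_null_iff (countable_range _)).2 fun r _ => ?_
    exact measure_iUnion_null_iff.2 fun K => hN c r K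
  have haeBad : ∀ᵐ a ∂(volume : Measure (EuclideanSpace ℝ (Fin n))), a ∉ Bad := by
    rw [ae_iff]
    simpa using hBad
  filter_upwards [haeBad] with a hnb haA
  obtain ⟨K, ρ, hρ0, hball⟩ := hg a haA
  obtain ⟨c, hcD, hc⟩ : ∃ c ∈ D, c ∈ ball a (ρ/8) :=
    hDd.exists_mem_open isOpen_ball ⟨a, mem_ball_self (by positivity)⟩
  obtain ⟨q, hq1, hq2⟩ := exists_rat_btwn (show ρ/4 < ρ/2 by linarith)
  set r : ℝ := (q : ℝ) with hr_def
  have haB : a ∈ ball c r := by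
    rw [mem_ball, dist_comm]
    rw [mem_ball] at hc
    linarith
  have hsub : ball c r ⊆ ball a ρ := by
    intro y hy
    rw [mem_ball] at hy hc ⊢
    calc dist y a ≤ dist y c + dist c a := dist_triangle _ _ _
      _ < ρ := by linarith
  have hne : (ball c r).Nonempty := ⟨a, haB⟩
  have hMb : ∀ y ∈ ball c r, |g y| ≤ |g a| + K * ρ := by
    intro y hy
    have h1 := hball y (hsub hy)
    have h2 : ‖y - a‖ ≤ ρ := by
      rw [← dist_eq_norm]
      exact le_of_lt (mem_ball.1 (hsub hy))
    have h3 : (K : ℝ) * ‖y - a‖ ≤ K * ρ :=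
      mul_le_mul_of_nonneg_left h2 (Nat.cast_nonneg K)
    have h4 := abs_sub_abs_le_abs_sub (g y) (g a)
    linarith
  have hcond : (ball c r).Nonempty ∧ ∃ M, ∀ y ∈ ball c r, |g y| ≤ M :=
    ⟨hne, ⟨|g a| + K * ρ, hMb⟩⟩
  have hnK : a ∉ N c r (K : ℝ≥0) := by
    intro hmem
    exact hnb (mem_biUnion hcD (mem_biUnion ⟨q, rfl⟩ (mem_iUnion.2 ⟨K, hmem⟩)))
  have hnK2 : a ∉ ({x | ¬ (DifferentiableAt ℝ (w c r (K:ℝ≥0)) x ∧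
      DifferentiableAt ℝ (v c r (K:ℝ≥0)) x)} : Set (EuclideanSpace ℝ (Fin n))) := by
    intro hx
    apply hnK
    show a ∈ (if ((ball c r).Nonempty ∧ ∃ M, ∀ y ∈ ball c r, |g y| ≤ M) then
      {x | ¬ (DifferentiableAt ℝ (w c r (K:ℝ≥0)) x ∧ DifferentiableAt ℝ (v c r (K:ℝ≥0)) x)}
      else ∅)
    rw [if_pos hcond]
    exact hx
  rw [mem_setOf_eq, not_not] at hnK2
  have hnK := hnK2
  obtain ⟨hwD, hvD⟩ := hnK
  -- basic facts
  have hKcast : ((K : ℝ≥0) : ℝ) = (K : ℝ) := by norm_cast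
  have hbddA : ∀ x, BddAbove ((fun y => g y - ((K:ℝ≥0):ℝ) * dist x y) '' ball c r) := by
    intro x
    refine ⟨|g a| + K * ρ, ?_⟩
    rintro z ⟨y, hy, rfl⟩
    have h0 : (0:ℝ) ≤ ((K:ℝ≥0):ℝ) * dist x y := by positivity
    have := (abs_le.1 (hMb y hy)).2
    show g y - ((K:ℝ≥0):ℝ) * dist x y ≤ |g a| + K * ρ
    linarith
  have hbddB : ∀ x, BddBelow ((fun y => g y + ((K:ℝ≥0):ℝ) * dist x y) '' ball c r) := by
    intro x
    refine ⟨-(|g a| + K * ρ), ?_⟩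
    rintro z ⟨y, hy, rfl⟩
    have h0 : (0:ℝ) ≤ ((K:ℝ≥0):ℝ) * dist x y := by positivity
    have := (abs_le.1 (hMb y hy)).1
    show -(|g a| + K * ρ) ≤ g y + ((K:ℝ≥0):ℝ) * dist x y
    linarith
  have hgw : ∀ x ∈ ball c r, g x ≤ w c r K x := by
    intro x hx
    have : g x - ((K:ℝ≥0):ℝ) * dist x x ≤ w c r K x := le_csSup (hbddA x) ⟨x, hx, rfl⟩
    simpa [dist_self] using this
  have hvg : ∀ x ∈ ball c r, v c r K x ≤ g x := by
    intro x hx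
    have : v c r K x ≤ g x + ((K:ℝ≥0):ℝ) * dist x x := csInf_le (hbddB x) ⟨x, hx, rfl⟩
    simpa [dist_self] using this
  have hwa : w c r K a = g a := by
    refine le_antisymm ?_ (hgw a haB)
    refine csSup_le (hne.image _) ?_
    rintro z ⟨y, hy, rfl⟩
    have h1 := abs_le.1 (hball y (hsub hy))
    have h2 : ‖y - a‖ = dist a y := by rw [dist_comm, dist_eq_norm]
    show g y - ((K:ℝ≥0):ℝ) * dist a y ≤ g a
    rw [hKcast, ← h2]
    linarith [h1.2]
  have hva : v c r K a = g a := by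
    refine le_antisymm (hvg a haB) ?_
    refine le_csInf (hne.image _) ?_
    rintro z ⟨y, hy, rfl⟩
    have h1 := abs_le.1 (hball y (hsub hy))
    have h2 : ‖y - a‖ = dist a y := by rw [dist_comm, dist_eq_norm]
    show g a ≤ g y + ((K:ℝ≥0):ℝ) * dist a y
    rw [hKcast, ← h2]
    linarith [h1.1]
  have hmem : ball c r ∈ 𝓝 a := isOpen_ball.mem_nhds haB
  exact squeeze_differentiableAt
    (eventually_of_mem hmem hvg) (eventually_of_mem hmem hgw) hva hwa hvD hwD

/-- Stepanov's theorem: if `f` has finite upper dilatation at every point of a measurable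
subset `A` of an open set `U`, then `f` is differentiable at almost every point of `A`. -/
theorem stepanov_differentiable_ae {n m : ℕ}
    (U : Set (EuclideanSpace ℝ (Fin n))) (hU : IsOpen U)
    (A : Set (EuclideanSpace ℝ (Fin n))) (hA : MeasurableSet A) (hAU : A ⊆ U)
    (f : EuclideanSpace ℝ (Fin n) → EuclideanSpace ℝ (Fin m))
    (hf : ∀ a ∈ A,
      Filter.limsup (fun x => ((‖f x - f a‖ / ‖x - a‖ : ℝ) : EReal)) (𝓝[U \ {a}] a) < ⊤) :
    ∀ᵐ a ∂volume, a ∈ A → DifferentiableAt ℝ f a := by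
  -- Step 1: pointwise bound on small balls
  have key : ∀ a ∈ A, ∃ K : ℕ, ∃ ρ > (0:ℝ), ∀ x ∈ ball a ρ, ‖f x - f a‖ ≤ K * ‖x - a‖ := by
    intro a ha
    obtain ⟨C, hC1, -⟩ := EReal.lt_iff_exists_real_btwn.1 (hf a ha)
    have hev : ∀ᶠ x in 𝓝[U \ {a}] a,
        ((‖f x - f a‖ / ‖x - a‖ : ℝ) : EReal) < (C : EReal) :=
      Filter.eventually_lt_of_limsup_lt hC1
    rw [eventually_nhdsWithin_iff] at hev
    rw [Metric.eventually_nhds_iff] at hev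
    obtain ⟨ε, hε0, hε⟩ := hev
    obtain ⟨ε₂, hε₂0, hε₂⟩ := Metric.isOpen_iff.1 hU a (hAU ha)
    refine ⟨⌈max C 0⌉₊, min ε ε₂, lt_min hε0 hε₂0, ?_⟩
    intro x hx
    rw [mem_ball] at hx
    by_cases hxa : x = a
    · simp [hxa]
    · have hxU : x ∈ U \ {a} :=
        ⟨hε₂ (mem_ball.2 (lt_of_lt_of_le hx (min_le_right _ _))), hxa⟩
      have h1 := hε (lt_of_lt_of_le hx (min_le_left _ _)) hxU
      have h2 : (‖f x - f a‖ / ‖x - a‖ : ℝ) < C := by exact_mod_cast h1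
      have h3 : (0:ℝ) < ‖x - a‖ := by
        rw [norm_pos_iff, sub_ne_zero]
        exact hxa
      have h4 : ‖f x - f a‖ < C * ‖x - a‖ := (div_lt_iff₀ h3).1 h2
      have h5 : C ≤ (⌈max C 0⌉₊ : ℝ) := le_trans (le_max_left _ _) (Nat.le_ceil _)
      have h6 : C * ‖x - a‖ ≤ (⌈max C 0⌉₊ : ℝ) * ‖x - a‖ :=
        mul_le_mul_of_nonneg_right h5 (le_of_lt h3)
      linarith
  -- Step 2: componentwise
  have hcomp : ∀ i : Fin m, ∀ᵐ a ∂(volume : Measure (EuclideanSpace ℝ (Fin n))),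
      a ∈ A → DifferentiableAt ℝ (fun x => f x i) a := by
    intro i
    apply stepanov_real A (fun x => f x i)
    intro a ha
    obtain ⟨K, ρ, hρ0, hb⟩ := key a ha
    refine ⟨K, ρ, hρ0, fun x hx => ?_⟩
    have h1 : |f x i - f a i| ≤ ‖f x - f a‖ := by
      have h2 : f x i - f a i = (f x - f a) i := by simp
      rw [h2]
      set z := f x - f a
      have h3 : |z i| = Real.sqrt (‖z i‖ ^ 2) := by
        rw [Real.norm_eq_abs, Real.sqrt_sq_eq_abs, abs_abs]
      rw [h3, EuclideanSpace.norm_eq]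
      exact Real.sqrt_le_sqrt (Finset.single_le_sum
        (fun j _ => sq_nonneg ‖z j‖) (Finset.mem_univ i))
    exact h1.trans (hb x hx)
  have hall : ∀ᵐ a ∂(volume : Measure (EuclideanSpace ℝ (Fin n))),
      ∀ i : Fin m, a ∈ A → DifferentiableAt ℝ (fun x => f x i) a :=
    (ae_all_iff).2 hcomp
  filter_upwards [hall] with a ha haA
  exact differentiableAt_euclidean.2 fun i => ha i haA
end
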